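/- Writing X3 for the linear form e0·X0 + e1·X1 + e2·X2, the polynomial Φ_q(C) = X0^q·∂C/∂X0 + X1^q·∂C/∂X1 + X2^q·∂C/∂X2 satisfies the identity Φ_q(C) = d·(X0^{3d} + X1^{3d} + X2^{3d} + X3^{3d}) in F_q[X0,X1,X2]. -/
import Mathlib


open MvPolynomial

/-- The polynomial `C = X0^d + X1^d + X2^d + (e0·X0 + e1·X1 + e2·X2)^d` over `F_q`. -/
noncomputable def fermatSlice (F : Type) [Field F] (d : ℕ) (e0 e1 e2 : F) :
    MvPolynomial (Fin 3) F :=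
  X 0 ^ d + X 1 ^ d + X 2 ^ d +
    (MvPolynomial.C e0 * X 0 + MvPolynomial.C e1 * X 1 + MvPolynomial.C e2 * X 2) ^ d

/-- `Φ_q(Q) = X0^q·∂Q/∂X0 + X1^q·∂Q/∂X1 + X2^q·∂Q/∂X2`. -/
noncomputable def Phi (F : Type) [Field F] (q : ℕ) (Q : MvPolynomial (Fin 3) F) :
    MvPolynomial (Fin 3) F :=
  X 0 ^ q * MvPolynomial.pderiv 0 Q + X 1 ^ q * MvPolynomial.pderiv 1 Q +
    X 2 ^ q * MvPolynomial.pderiv 2 Q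

/-- Writing `X3` for the linear form `e0·X0 + e1·X1 + e2·X2`, one has the
polynomial identity `Φ_q(C) = d·(X0^{3d} + X1^{3d} + X2^{3d} + X3^{3d})` in
`F_q[X0,X1,X2]`. -/
theorem statement10 (p h : ℕ) (hp : Nat.Prime p) (hp3 : 3 < p) (hh : 0 < h)
    (F : Type) [Field F] [Fintype F] (hcard : Fintype.card F = p ^ h)
    (d : ℕ) (hd : p ^ h = 2 * d + 1) (e0 e1 e2 : F) :
    Phi F (p ^ h) (fermatSlice F d e0 e1 e2) =
      MvPolynomial.C (d : F) *
        (X 0 ^ (3 * d) + X 1 ^ (3 * d) + X 2 ^ (3 * d) +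
          (MvPolynomial.C e0 * X 0 + MvPolynomial.C e1 * X 1 +
            MvPolynomial.C e2 * X 2) ^ (3 * d)) := by
  haveI : CharP F p := by
    have h1 : ringChar F ∣ p ^ h := by
      rw [← hcard]
      exact ringChar.dvd (FiniteField.cast_card_eq_zero F)
    have hprime : (ringChar F).Prime := CharP.char_is_prime F (ringChar F)
    have h2 : ringChar F = p :=
      (Nat.prime_dvd_prime_iff_eq hprime hp).mp (hprime.dvd_of_dvd_pow h1)
    rw [← h2]; exact ringChar.charP F
  haveI : Fact p.Prime := ⟨hp⟩
  have hd2 : 2 ≤ d := by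
    have h5 : p ≤ p ^ h := Nat.le_self_pow hh.ne' p
    omega
  have he : ∀ e : F, e ^ p ^ h = e := fun e => by
    rw [← hcard]; exact FiniteField.pow_card e
  set L : MvPolynomial (Fin 3) F :=
    MvPolynomial.C e0 * X 0 + MvPolynomial.C e1 * X 1 + MvPolynomial.C e2 * X 2 with hL
  have hLq : L ^ p ^ h =
      MvPolynomial.C e0 * X 0 ^ p ^ h + MvPolynomial.C e1 * X 1 ^ p ^ h +
        MvPolynomial.C e2 * X 2 ^ p ^ h := by
    rw [hL, add_pow_char_pow, add_pow_char_pow, mul_pow, mul_pow, mul_pow,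
      ← C_pow, ← C_pow, ← C_pow, he, he, he]
  have hD : ∀ i : Fin 3, pderiv i (fermatSlice F d e0 e1 e2) =
      MvPolynomial.C (d : F) * X i ^ (d - 1) * pderiv i (X i) +
        MvPolynomial.C (d : F) * L ^ (d - 1) * pderiv i L := by
    intro i
    simp only [fermatSlice, ← hL, map_add, pderiv_pow]
    fin_cases i <;>
      simp [pderiv_X_self, pderiv_X_of_ne, map_natCast]
  have h3d : ∀ A : MvPolynomial (Fin 3) F, A ^ (3 * d) = A ^ p ^ h * A ^ (d - 1) := by
    intro A
    rw [← pow_add]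
    congr 1
    omega
  have hDL : ∀ i : Fin 3, pderiv i L = MvPolynomial.C ((![e0, e1, e2] : Fin 3 → F) i) := by
    intro i
    fin_cases i <;> simp [hL, pderiv_X_self, pderiv_X_of_ne]
  rw [Phi, hD 0, hD 1, hD 2, hDL 0, hDL 1, hDL 2]
  have hc0 : (![e0, e1, e2] : Fin 3 → F) 0 = e0 := rfl
  have hc1 : (![e0, e1, e2] : Fin 3 → F) 1 = e1 := rfl
  have hc2 : (![e0, e1, e2] : Fin 3 → F) 2 = e2 := rfl
  rw [hc0, hc1, hc2, pderiv_X_self, pderiv_X_self, pderiv_X_self]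
  rw [h3d, h3d, h3d, h3d, hLq]
  ring
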